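/- Define operators on a Hilbert space with orthonormal basis (Ψ_n) by M₀ = [A, A†] and M_j⁺ = [M_{j−1}⁺, A†] for j ≥ 1 (with M₁⁺ = [M₀, A†]), where A†Ψ_n = √2 b_n Ψ_{n+1} and AΨ_n = √2 b_{n−1}Ψ_{n−1}. Then M_j⁺ Ψ_n = 2·(√2)^j · (∏_{i=0}^{j−1} b_{n+i}) · 𝔙_n^{(j)} · Ψ_{n+j}, where 𝔙_n^{(0)} = b_n² − b_{n−1}² and 𝔙_n^{(j)} = 𝔙_{n+1}^{(j−1)} − 𝔙_n^{(j−1)}. -/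
import Mathlib


theorem stmt_9 {H : Type*} [NormedAddCommGroup H] [InnerProductSpace ℝ H] [CompleteSpace H]
    (Ψ : HilbertBasis ℕ ℝ H) (b : ℕ → ℝ)
    (hbpos : ∀ n, 0 < b n) (hbbdd : ∃ C : ℝ, ∀ n, b n ≤ C)
    (A Ad : H →L[ℝ] H)
    (hAd : ∀ n : ℕ, Ad (Ψ n) = (Real.sqrt 2 * b n) • Ψ (n + 1))
    (hA0 : A (Ψ 0) = 0)
    (hA : ∀ n : ℕ, A (Ψ (n + 1)) = (Real.sqrt 2 * b n) • Ψ n)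
    (M : ℕ → H →L[ℝ] H)
    (hM0 : M 0 = A ∘L Ad - Ad ∘L A)
    (hMrec : ∀ j : ℕ, M (j + 1) = M j ∘L Ad - Ad ∘L M j)
    (V : ℕ → ℕ → ℝ)
    (hV00 : V 0 0 = (b 0) ^ 2)
    (hV0 : ∀ n : ℕ, V 0 (n + 1) = (b (n + 1)) ^ 2 - (b n) ^ 2)
    (hVrec : ∀ j n : ℕ, V (j + 1) n = V j (n + 1) - V j n) :
    ∀ j n : ℕ, M j (Ψ n) =
      (2 * (Real.sqrt 2) ^ j * (∏ i ∈ Finset.range j, b (n + i)) * V j n) • Ψ (n + j) := by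
  have h2 : Real.sqrt 2 * Real.sqrt 2 = 2 := Real.mul_self_sqrt (by norm_num)
  intro j
  induction j with
  | zero =>
    intro n
    cases n with
    | zero =>
      rw [hM0]
      simp only [ContinuousLinearMap.sub_apply, ContinuousLinearMap.comp_apply, hAd, hA0,
        map_smul, hA, hV00, map_zero]
      rw [smul_smul]
      simp only [pow_zero, Finset.range_zero, Finset.prod_empty, sub_zero, Nat.add_zero]
      congr 1
      linear_combination (b 0 ^ 2) * h2
    | succ m =>
      rw [hM0]
      simp only [ContinuousLinearMap.sub_apply, ContinuousLinearMap.comp_apply, hAd,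
        map_smul, hA, hV0]
      rw [smul_smul, smul_smul, ← sub_smul]
      simp only [pow_zero, Finset.range_zero, Finset.prod_empty, Nat.add_zero]
      congr 1
      linear_combination (b (m + 1) ^ 2 - b m ^ 2) * h2
  | succ j ih =>
    intro n
    rw [hMrec]
    simp only [ContinuousLinearMap.sub_apply, ContinuousLinearMap.comp_apply, hAd,
      map_smul, ih, hAd]
    have hidx : n + 1 + j = n + (j + 1) := by omega
    rw [hidx, Nat.add_assoc n j 1, smul_smul, smul_smul, ← sub_smul]
    congr 1
    have hP : b n * ∏ i ∈ Finset.range j, b (n + 1 + i) =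
        (∏ i ∈ Finset.range j, b (n + i)) * b (n + j) := by
      rw [← Finset.prod_range_succ, Finset.prod_range_succ', Nat.add_zero, mul_comm]
      congr 1
      exact Finset.prod_congr rfl fun i _ => by rw [Nat.add_right_comm, Nat.add_assoc]
    rw [hVrec, Finset.prod_range_succ]
    linear_combination (2 * Real.sqrt 2 ^ j * Real.sqrt 2 * V j (n + 1)) * hP
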